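/- Let A⁺, A⁻ : ℝ → ℝ and u⁺, u⁻, û, c ∈ ℝ. Assume the Rankine–Hugoniot condition A⁺(u⁺) = A⁻(u⁻) and that the Kruzkov entropy inequality holds at c. Then: (i) if u⁻ ≤ u⁺ < c < û, then A⁺(c) ≤ A⁻(c); (ii) if u⁻ < c < u⁺ ≤ û, then A⁻(u⁻) ≤ A⁻(c). -/

import Mathlib

open MeasureTheory Filter Set

/-- The Kruzkov entropy inequality at `c` for data `(um, up, uh)`:
`A⁺(u⁺)·sign(u⁺−c) − 2·sign(u⁺−û)·A⁺(c)·𝟙_{(û,u⁺)}(c) ≤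
 A⁻(u⁻)·sign(u⁻−c) − 2·sign(u⁻−û)·A⁻(c)·𝟙_{(û,u⁻)}(c)`. -/
def KruzkovIneq (Ap Am : ℝ → ℝ) (um up uh c : ℝ) : Prop :=
  Ap up * Real.sign (up - c) -
      2 * Real.sign (up - uh) * Ap c * Set.indicator (Set.uIoo uh up) (1 : ℝ → ℝ) c
    ≤ Am um * Real.sign (um - c) -
      2 * Real.sign (um - uh) * Am c * Set.indicator (Set.uIoo uh um) (1 : ℝ → ℝ) c

/-!
When `u < c < û` the entropy flux of the state `u` is `2 A(c) - A(u)`, and when `c < u ≤ û` it is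
`A(u)`. Substituting these values into the Kruzkov inequality and replacing `A⁺(u⁺)` by `A⁻(u⁻)`
leaves a linear inequality that is each of the two claims.
-/

noncomputable def kruzkovFlux (A : ℝ → ℝ) (u uh c : ℝ) : ℝ :=
  A u * Real.sign (u - c) - 2 * Real.sign (u - uh) * A c * Set.indicator (Set.uIoo uh u) 1 c

theorem kruzkovIneq_iff {Ap Am : ℝ → ℝ} {um up uh c : ℝ} :
    KruzkovIneq Ap Am um up uh c ↔ kruzkovFlux Ap up uh c ≤ kruzkovFlux Am um uh c :=
  Iff.rfl

theorem kruzkovFlux_of_lt_of_lt (A : ℝ → ℝ) {u uh c : ℝ} (huc : u < c) (hc : c < uh) :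
    kruzkovFlux A u uh c = 2 * A c - A u := by
  have hind : Set.indicator (Set.uIoo uh u) (1 : ℝ → ℝ) c = 1 :=
    Set.indicator_of_mem (Set.mem_uIoo_of_gt huc hc) _
  rw [kruzkovFlux, hind, Real.sign_of_neg (by linarith), Real.sign_of_neg (by linarith)]
  ring

theorem kruzkovFlux_of_lt_of_le (A : ℝ → ℝ) {u uh c : ℝ} (hcu : c < u) (hu : u ≤ uh) :
    kruzkovFlux A u uh c = A u := by
  have hind : Set.indicator (Set.uIoo uh u) (1 : ℝ → ℝ) c = 0 := by
    rw [Set.uIoo_of_ge hu]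
    exact Set.indicator_of_notMem (fun hc => (hc.1.trans hcu).false) _
  rw [kruzkovFlux, hind, Real.sign_of_pos (by linarith)]
  ring

theorem stmt_12 (Ap Am : ℝ → ℝ) (up um uh c : ℝ)
    (hRH : Ap up = Am um)
    (hkruz : KruzkovIneq Ap Am um up uh c) :
    (um ≤ up → up < c → c < uh → Ap c ≤ Am c) ∧
    (um < c → c < up → up ≤ uh → Am um ≤ Am c) := by
  rw [kruzkovIneq_iff] at hkruz
  constructor
  · intro humup hupc hc
    rw [kruzkovFlux_of_lt_of_lt Ap hupc hc,
      kruzkovFlux_of_lt_of_lt Am (humup.trans_lt hupc) hc] at hkruz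
    linarith
  · intro humc hcup hup
    rw [kruzkovFlux_of_lt_of_le Ap hcup hup,
      kruzkovFlux_of_lt_of_lt Am humc (hcup.trans_le hup)] at hkruz
    linarith
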